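/- Let 0 < β < α, let δ ∈ (0, α), and let w ∈ H with Im w ∈ [β, α]. Then there exists η > 0 (depending only on α, β, δ) such that for every g ∈ SL(2,ℝ) with Im(g·w) ∈ [β, α], the Euclidean ball B_η(g·w) is contained in g·B_δ(w), where B_r(z) denotes the open Euclidean disk of radius r centered at z intersected with H. -/

import Mathlib

/-! For `g = [[a, b], [c, d]]` and `z₀ = g • w` one has `Im z₀ = Im w / |cw + d|²` and
`|c| Im w ≤ |Im (cw + d)| ≤ |cw + d|`, so the imaginary parts lying in `[β, α]` give
`|cw + d|² ≤ α / β` and `|c| ≤ |cw + d| / β`. The inverse map `z ↦ (dz - b) / (-cz + a)` has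
denominator `-cz + a = (cw + d)⁻¹ - c (z - z₀)`, which for `|z - z₀| < η` stays above
`1 / (2 |cw + d|)` in modulus; hence `|g⁻¹ z - w| = |z - z₀| |cw + d| / |-cz + a| < 2 η |cw + d|²`,
and `η = β min(β, δ) / (2α)` makes both estimates work. -/

open Complex

noncomputable def mobius (a b c d : ℝ) (z : ℂ) : ℂ := (a * z + b) / (c * z + d)

lemma mobius_im (a b c d : ℝ) (z : ℂ) :
    (mobius a b c d z).im = (a * d - b * c) * z.im / normSq (c * z + d) := by
  rw [mobius, div_im, div_sub_div_same]
  congr 1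
  simp only [add_re, add_im, mul_re, mul_im, ofReal_re, ofReal_im]
  ring

lemma abs_mul_im_le_norm_add (c d : ℝ) {z : ℂ} (hz : 0 ≤ z.im) :
    |c| * z.im ≤ ‖(c : ℂ) * z + d‖ := by
  have h := abs_im_le_norm ((c : ℂ) * z + d)
  simp only [add_im, mul_im, ofReal_re, ofReal_im, zero_mul, add_zero] at h
  rwa [abs_mul, abs_of_nonneg hz] at h

lemma denom_ne_zero_of_im_mobius_ne_zero {a b c d : ℝ} {w : ℂ}
    (hw : (mobius a b c d w).im ≠ 0) : (c : ℂ) * w + d ≠ 0 := by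
  rintro h0
  rw [mobius, h0, div_zero, zero_im] at hw
  exact hw rfl

section Mobius

variable {a b c d : ℝ}

lemma mobius_sub_mobius (h : a * d - b * c = 1) {z w : ℂ} (hz : (c : ℂ) * z + d ≠ 0)
    (hw : (c : ℂ) * w + d ≠ 0) :
    mobius a b c d z - mobius a b c d w = (z - w) / ((c * z + d) * (c * w + d)) := by
  have hC : (a : ℂ) * d - b * c = 1 := by exact_mod_cast h
  rw [mobius, mobius, div_sub_div _ _ hz hw]
  congr 1
  linear_combination (z - w) * hC

lemma neg_mul_mobius_add (h : a * d - b * c = 1) {z : ℂ} (hz : (c : ℂ) * z + d ≠ 0) :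
    -c * mobius a b c d z + a = ((c : ℂ) * z + d)⁻¹ := by
  have hC : (a : ℂ) * d - b * c = 1 := by exact_mod_cast h
  refine eq_inv_of_mul_eq_one_left ?_
  rw [mobius, add_mul, mul_assoc, div_mul_cancel₀ _ hz]
  linear_combination hC

lemma mobius_inv_mobius (h : a * d - b * c = 1) {z : ℂ} (hz : (c : ℂ) * z + d ≠ 0) :
    mobius d (-b) (-c) a (mobius a b c d z) = z := by
  have hL := neg_mul_mobius_add h hz
  have hC : (a : ℂ) * d - b * c = 1 := by exact_mod_cast h
  rw [mobius, div_eq_iff (by push_cast; rw [hL]; exact inv_ne_zero hz)]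
  push_cast
  rw [hL, eq_mul_inv_iff_mul_eq₀ hz, mobius, add_mul, mul_assoc, div_mul_cancel₀ _ hz]
  linear_combination z * hC

lemma mobius_mobius_inv (h : a * d - b * c = 1) {z : ℂ} (hz : -(c : ℂ) * z + a ≠ 0) :
    mobius a b c d (mobius d (-b) (-c) a z) = z := by
  have h' : d * a - -b * -c = 1 := by linarith
  simpa using mobius_inv_mobius h' (by push_cast; exact hz)

lemma ball_mobius_subset_image_ball (h : a * d - b * c = 1) {w : ℂ}
    (hw : (c : ℂ) * w + d ≠ 0) {η δ : ℝ} (hc : 2 * |c| * η * ‖(c : ℂ) * w + d‖ ≤ 1)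
    (hδ : 2 * η * ‖(c : ℂ) * w + d‖ ^ 2 ≤ δ) :
    Metric.ball (mobius a b c d w) η ⊆ mobius a b c d '' Metric.ball w δ := by
  set K := (c : ℂ) * w + d
  set z₀ := mobius a b c d w
  have hk : 0 < ‖K‖ := norm_pos_iff.mpr hw
  intro z hz
  rw [Metric.mem_ball, dist_eq] at hz
  set L := -(c : ℂ) * z + a
  have hL_eq : L = K⁻¹ - c * (z - z₀) := by rw [← neg_mul_mobius_add h hw]; ring
  have hcz : ‖(c : ℂ) * (z - z₀)‖ ≤ 1 / (2 * ‖K‖) := by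
    rw [norm_mul, norm_real, Real.norm_eq_abs, le_div_iff₀ (by positivity)]
    calc |c| * ‖z - z₀‖ * (2 * ‖K‖) ≤ |c| * η * (2 * ‖K‖) := by gcongr
      _ ≤ 1 := by linarith
  have hL : 1 / (2 * ‖K‖) ≤ ‖L‖ :=
    calc 1 / (2 * ‖K‖) = ‖K⁻¹‖ - 1 / (2 * ‖K‖) := by rw [norm_inv]; field_simp; ring
      _ ≤ ‖K⁻¹‖ - ‖(c : ℂ) * (z - z₀)‖ := by gcongr
      _ ≤ ‖L‖ := hL_eq ▸ norm_sub_norm_le _ _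
  have hL0 : L ≠ 0 := norm_pos_iff.mp (lt_of_lt_of_le (by positivity) hL)
  refine ⟨mobius d (-b) (-c) a z, ?_, mobius_mobius_inv h hL0⟩
  have hdiff := mobius_sub_mobius (a := d) (b := -b) (c := -c) (d := a) (by linarith)
    (z := z) (w := z₀) (by push_cast; exact hL0)
    (by push_cast; rw [neg_mul_mobius_add h hw]; exact inv_ne_zero hw)
  push_cast at hdiff
  rw [mobius_inv_mobius h hw, neg_mul_mobius_add h hw] at hdiff
  rw [Metric.mem_ball, dist_eq, hdiff, norm_div, norm_mul, norm_inv]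
  calc ‖z - z₀‖ / (‖L‖ * ‖K‖⁻¹) ≤ ‖z - z₀‖ / (1 / (2 * ‖K‖) * ‖K‖⁻¹) := by gcongr
    _ = 2 * ‖z - z₀‖ * ‖K‖ ^ 2 := by field_simp
    _ < 2 * η * ‖K‖ ^ 2 := by gcongr
    _ ≤ δ := hδ

lemma norm_denom_sq_mul_le (h : a * d - b * c = 1) {w : ℂ} {α β : ℝ} (hβ : 0 < β)
    (hz : β ≤ (mobius a b c d w).im) (hw : w.im ≤ α) :
    ‖(c : ℂ) * w + d‖ ^ 2 * β ≤ α := by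
  have hK := denom_ne_zero_of_im_mobius_ne_zero (hβ.trans_le hz).ne'
  rw [mobius_im, h, one_mul, normSq_eq_norm_sq, le_div_iff₀ (by positivity)] at hz
  linarith

lemma ball_mobius_subset_image_ball_of_im_mem (h : a * d - b * c = 1) {w : ℂ} {α β η δ : ℝ}
    (hβ : 0 < β) (hw : β ≤ w.im) (hwα : w.im ≤ α) (hz : β ≤ (mobius a b c d w).im)
    (hη : 0 ≤ η) (hηβ : 2 * α * η ≤ β ^ 2) (hηδ : 2 * α * η ≤ β * δ) :
    Metric.ball (mobius a b c d w) η ⊆ mobius a b c d '' Metric.ball w δ := by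
  set K := (c : ℂ) * w + d
  have hK : K ≠ 0 := denom_ne_zero_of_im_mobius_ne_zero (hβ.trans_le hz).ne'
  have hK2 : ‖K‖ ^ 2 * β ≤ α := norm_denom_sq_mul_le h hβ hz hwα
  have hc : |c| * β ≤ ‖K‖ :=
    (mul_le_mul_of_nonneg_left hw (abs_nonneg c)).trans (abs_mul_im_le_norm_add c d (by linarith))
  refine ball_mobius_subset_image_ball h hK ?_ ?_
  · refine le_of_mul_le_mul_right ?_ (by positivity : 0 < β ^ 2)
    calc 2 * |c| * η * ‖K‖ * β ^ 2 = (|c| * β) * ‖K‖ * (2 * η * β) := by ring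
      _ ≤ ‖K‖ * ‖K‖ * (2 * η * β) := by gcongr
      _ = ‖K‖ ^ 2 * β * (2 * η) := by ring
      _ ≤ α * (2 * η) := by gcongr
      _ ≤ 1 * β ^ 2 := by linarith
  · refine le_of_mul_le_mul_right ?_ hβ
    calc 2 * η * ‖K‖ ^ 2 * β = ‖K‖ ^ 2 * β * (2 * η) := by ring
      _ ≤ α * (2 * η) := by gcongr
      _ ≤ δ * β := by linarith

end Mobius

theorem stmt_9_general (α β δ : ℝ) (hβ : 0 < β) (hβα : β < α) (hδ0 : 0 < δ) :
    ∃ η > 0, ∀ w : ℂ, β ≤ w.im → w.im ≤ α →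
      ∀ a b c d : ℝ, a * d - b * c = 1 →
        β ≤ (((a : ℂ) * w + b) / ((c : ℂ) * w + d)).im →
        (((a : ℂ) * w + b) / ((c : ℂ) * w + d)).im ≤ α →
        Metric.ball (((a : ℂ) * w + b) / ((c : ℂ) * w + d)) η ⊆
          (fun u : ℂ => ((a : ℂ) * u + b) / ((c : ℂ) * u + d)) '' Metric.ball w δ := by
  have hα : 0 < α := hβ.trans hβα
  refine ⟨β * min β δ / (2 * α), by positivity, fun w hw hwα a b c d h hz _ => ?_⟩
  have hη : 2 * α * (β * min β δ / (2 * α)) = β * min β δ := mul_div_cancel₀ _ (by positivity)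
  refine ball_mobius_subset_image_ball_of_im_mem h hβ hw hwα hz (by positivity) ?_ ?_
  · rw [hη, sq]; gcongr; exact min_le_left _ _
  · rw [hη]; gcongr; exact min_le_right _ _

/-- For `0 < β < α`, `δ ∈ (0,α)` there exists `η > 0` (depending only on `α, β, δ`)
such that for every `w ∈ H` with `Im w ∈ [β,α]` and every `g ∈ SL(2,ℝ)` with
`Im(g·w) ∈ [β,α]` one has `B_η(g·w) ⊆ g·B_δ(w)`. -/
theorem stmt_9 (α β δ : ℝ) (hβ : 0 < β) (hβα : β < α) (hδ0 : 0 < δ) (hδα : δ < α) :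
    ∃ η > 0, ∀ w : ℂ, β ≤ w.im → w.im ≤ α →
      ∀ a b c d : ℝ, a * d - b * c = 1 →
        β ≤ (((a : ℂ) * w + b) / ((c : ℂ) * w + d)).im →
        (((a : ℂ) * w + b) / ((c : ℂ) * w + d)).im ≤ α →
        Metric.ball (((a : ℂ) * w + b) / ((c : ℂ) * w + d)) η ⊆
          (fun u : ℂ => ((a : ℂ) * u + b) / ((c : ℂ) * u + d)) '' Metric.ball w δ :=
  stmt_9_general α β δ hβ hβα hδ0
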